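/- Let Y ~ N(θ, 1) and c > 0. For a fixed observation x with |x| ≥ c, the conditional log-likelihood θ ↦ log φ(x - θ) - log Q_c(θ), with Q_c(θ) = Φ(θ-c) + Φ(-θ-c), is unimodal in θ: its derivative equals (x - θ) - (φ(c-θ) - φ(c+θ))/Q_c(θ) and is strictly decreasing in θ, and hence the likelihood equation x = θ + (φ(c-θ) - φ(-c-θ))/Q_c(θ) has at most one solution. -/

import Mathlib

open MeasureTheory Set Filter

noncomputable def phi (x : ℝ) : ℝ := (Real.sqrt (2 * Real.pi))⁻¹ * Real.exp (-x ^ 2 / 2)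

noncomputable def Phi (x : ℝ) : ℝ := ∫ t in Iic x, phi t

/-- `Q_c(θ) = Φ(θ-c) + Φ(-θ-c) = P(|N(θ,1)| ≥ c)`. -/
noncomputable def Qc (c θ : ℝ) : ℝ := Phi (θ - c) + Phi (-θ - c)

lemma phi_pos (x : ℝ) : 0 < phi x := by
  unfold phi
  positivity

lemma phi_even (x : ℝ) : phi (-x) = phi x := by unfold phi; rw [neg_pow]; norm_num

lemma phi_cont : Continuous phi := by
  unfold phi
  fun_prop

lemma phi_eq (x : ℝ) : phi x = (Real.sqrt (2 * Real.pi))⁻¹ * Real.exp (-(1/2) * x ^ 2) := by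
  unfold phi; ring_nf

lemma phi_integrable : Integrable phi := by
  have := (integrable_exp_neg_mul_sq (show (0:ℝ) < 1/2 by norm_num)).const_mul
    (Real.sqrt (2 * Real.pi))⁻¹
  exact this.congr (by filter_upwards with x using (phi_eq x).symm)

lemma id_mul_phi_integrable : Integrable (fun x => x * phi x) := by
  have := (integrable_mul_exp_neg_mul_sq (show (0:ℝ) < 1/2 by norm_num)).const_mul
    (Real.sqrt (2 * Real.pi))⁻¹
  exact this.congr (by filter_upwards with x; rw [phi_eq]; ring)

lemma sq_mul_phi_integrable : Integrable (fun x => x ^ 2 * phi x) := by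
  have hint := (integrable_exp_neg_mul_sq (show (0:ℝ) < 1/4 by norm_num)).const_mul
    (4 * (Real.sqrt (2 * Real.pi))⁻¹)
  refine hint.mono' ?_ ?_
  · exact ((continuous_pow 2).mul phi_cont).aestronglyMeasurable
  · filter_upwards with x
    have h1 : x ^ 2 / 4 ≤ Real.exp (x ^ 2 / 4) := by
      nlinarith [Real.add_one_le_exp (x ^ 2 / 4), sq_nonneg x]
    have h2 : 0 < Real.exp (x ^ 2 / 4) := Real.exp_pos _
    have hsqrt : (0:ℝ) < (Real.sqrt (2 * Real.pi))⁻¹ := by positivity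
    rw [Real.norm_eq_abs, abs_of_nonneg (mul_nonneg (sq_nonneg x) (phi_pos x).le)]
    rw [phi_eq]
    have key : Real.exp (-(1/2) * x ^ 2) = Real.exp (-(x^2/4)) * Real.exp (-(1/4) * x ^ 2) := by
      rw [← Real.exp_add]; ring_nf
    rw [key]
    have h3 : x ^ 2 * Real.exp (-(x ^ 2 / 4)) ≤ 4 := by
      rw [Real.exp_neg, mul_inv_le_iff₀ h2]
      nlinarith
    calc x ^ 2 * ((Real.sqrt (2 * Real.pi))⁻¹ * (Real.exp (-(x^2/4)) * Real.exp (-(1/4) * x ^ 2)))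
        = (x ^ 2 * Real.exp (-(x^2/4))) * ((Real.sqrt (2 * Real.pi))⁻¹ * Real.exp (-(1/4) * x ^ 2)) := by ring
      _ ≤ 4 * ((Real.sqrt (2 * Real.pi))⁻¹ * Real.exp (-(1/4) * x ^ 2)) := by
          apply mul_le_mul_of_nonneg_right h3 (by positivity)
      _ = 4 * (Real.sqrt (2 * Real.pi))⁻¹ * Real.exp (-(1/4) * x ^ 2) := by ring

lemma hasDerivAt_phi (x : ℝ) : HasDerivAt phi (-x * phi x) x := by
  have h : HasDerivAt (fun y : ℝ => -y ^ 2 / 2) (-x) x := by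
    have := ((hasDerivAt_pow 2 x).neg).div_const 2
    simpa using this.congr_deriv (by ring)
  have := (h.exp).const_mul (Real.sqrt (2 * Real.pi))⁻¹
  unfold phi
  exact this.congr_deriv (by ring)

lemma phi_tendsto_atTop : Tendsto phi atTop (nhds 0) := by
  have h1 : Tendsto (fun x : ℝ => -x ^ 2 / 2) atTop atBot := by
    exact Tendsto.atBot_div_const (by norm_num : (0:ℝ) < 2)
      (tendsto_neg_atTop_atBot.comp (tendsto_pow_atTop two_ne_zero))
  have h2 := (Real.tendsto_exp_atBot.comp h1).const_mul (Real.sqrt (2 * Real.pi))⁻¹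
  rw [mul_zero] at h2
  exact h2.congr fun x => rfl

lemma phi_tendsto_atBot : Tendsto phi atBot (nhds 0) := by
  exact (phi_tendsto_atTop.comp tendsto_neg_atBot_atTop).congr fun x => phi_even x

lemma id_mul_phi_tendsto_atTop : Tendsto (fun x : ℝ => x * phi x) atTop (nhds 0) := by
  have hlo := rpow_mul_exp_neg_mul_sq_isLittleO_exp_neg
    (show (0:ℝ) < 1/2 by norm_num) 1
  have hexp : Tendsto (fun x : ℝ => Real.exp (-(1/2) * x)) atTop (nhds 0) := by
    apply Real.tendsto_exp_atBot.comp
    exact (tendsto_const_mul_atBot_of_neg (by norm_num : (-(1/2):ℝ) < 0)).2 tendsto_id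
  have h0 : Tendsto (fun x : ℝ => x ^ (1:ℝ) * Real.exp (-(1/2) * x ^ 2)) atTop (nhds 0) :=
    hlo.isBigO.trans_tendsto hexp
  have := h0.const_mul (Real.sqrt (2 * Real.pi))⁻¹
  rw [mul_zero] at this
  refine this.congr fun x => ?_
  rw [Real.rpow_one, phi_eq]; ring

lemma id_mul_phi_tendsto_atBot : Tendsto (fun x : ℝ => x * phi x) atBot (nhds 0) := by
  have := (id_mul_phi_tendsto_atTop.neg).comp tendsto_neg_atBot_atTop
  rw [neg_zero] at this
  refine this.congr fun x => ?_
  simp [Function.comp, phi_even]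

lemma Phi_pos (y : ℝ) : 0 < Phi y := by
  unfold Phi
  rw [setIntegral_pos_iff_support_of_nonneg_ae
    (Filter.Eventually.of_forall fun x => (phi_pos x).le) phi_integrable.integrableOn]
  have hs : Function.support phi = univ := by
    ext x; simp [Function.mem_support, (phi_pos x).ne']
  rw [hs, univ_inter]
  simp [Real.volume_Iic]

lemma hasDerivAt_Phi (y : ℝ) : HasDerivAt Phi (phi y) y := by
  have key : ∀ z : ℝ, Phi z = Phi 0 + ∫ t in (0:ℝ)..z, phi t := by
    intro z
    unfold Phi
    rw [← intervalIntegral.integral_Iic_sub_Iic phi_integrable.integrableOn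
      phi_integrable.integrableOn]
    ring
  have hd : HasDerivAt (fun z : ℝ => Phi 0 + ∫ t in (0:ℝ)..z, phi t) (phi y) y := by
    apply HasDerivAt.const_add
    exact intervalIntegral.integral_hasDerivAt_right
      (phi_integrable.intervalIntegrable)
      (phi_cont.stronglyMeasurable.stronglyMeasurableAtFilter)
      phi_cont.continuousAt
  exact hd.congr_of_eventuallyEq (Filter.Eventually.of_forall key)

lemma Phi_neg_eq (a : ℝ) : Phi (-a) = ∫ x in Ioi a, phi x := by
  have h := integral_comp_neg_Iic (-a) phi
  rw [neg_neg] at h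
  unfold Phi
  rw [← h]
  exact setIntegral_congr_fun measurableSet_Iic fun x _ => (phi_even x).symm

lemma int_id_mul_phi_Ioi (a : ℝ) : ∫ u in Ioi a, u * phi u = phi a := by
  have hderiv : ∀ u ∈ Ici a, HasDerivAt (fun v => -phi v) (u * phi u) u := by
    intro u _
    have := (hasDerivAt_phi u).neg
    exact this.congr_deriv (by ring)
  have ht : Tendsto (fun v => -phi v) atTop (nhds 0) := by
    have := phi_tendsto_atTop.neg; rwa [neg_zero] at this
  have := MeasureTheory.integral_Ioi_of_hasDerivAt_of_tendsto' hderiv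
    id_mul_phi_integrable.integrableOn ht
  rw [this]; ring

lemma int_id_mul_phi_Iic (b : ℝ) : ∫ u in Iic b, u * phi u = -phi b := by
  have hderiv : ∀ u ∈ Iic b, HasDerivAt (fun v => -phi v) (u * phi u) u := by
    intro u _
    have := (hasDerivAt_phi u).neg
    exact this.congr_deriv (by ring)
  have ht : Tendsto (fun v => -phi v) atBot (nhds 0) := by
    have := phi_tendsto_atBot.neg; rwa [neg_zero] at this
  have := MeasureTheory.integral_Iic_of_hasDerivAt_of_tendsto' hderiv
    id_mul_phi_integrable.integrableOn ht
  rw [this]; ring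

lemma hasDerivAt_id_mul_phi (u : ℝ) :
    HasDerivAt (fun v => -(v * phi v)) ((u ^ 2 - 1) * phi u) u := by
  have := ((hasDerivAt_id u).mul (hasDerivAt_phi u)).neg
  exact this.congr_deriv (by simp only [id_eq]; ring)

lemma sq_sub_one_mul_phi_integrable : Integrable (fun u : ℝ => (u ^ 2 - 1) * phi u) := by
  have : (fun u : ℝ => (u ^ 2 - 1) * phi u) = fun u => u ^ 2 * phi u - phi u :=
    funext fun u => by ring
  rw [this]
  exact sq_mul_phi_integrable.sub phi_integrable

lemma int_sq_sub_one_Ioi (a : ℝ) : ∫ u in Ioi a, (u ^ 2 - 1) * phi u = a * phi a := by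
  have ht : Tendsto (fun v => -(v * phi v)) atTop (nhds 0) := by
    have := id_mul_phi_tendsto_atTop.neg; rwa [neg_zero] at this
  have := MeasureTheory.integral_Ioi_of_hasDerivAt_of_tendsto' (a := a)
    (fun u _ => hasDerivAt_id_mul_phi u)
    sq_sub_one_mul_phi_integrable.integrableOn ht
  rw [this]; ring

lemma int_sq_sub_one_Iic (b : ℝ) : ∫ u in Iic b, (u ^ 2 - 1) * phi u = -(b * phi b) := by
  have ht : Tendsto (fun v => -(v * phi v)) atBot (nhds 0) := by
    have := id_mul_phi_tendsto_atBot.neg; rwa [neg_zero] at this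
  have := MeasureTheory.integral_Iic_of_hasDerivAt_of_tendsto' (a := b)
    (fun u _ => hasDerivAt_id_mul_phi u)
    sq_sub_one_mul_phi_integrable.integrableOn ht
  rw [this]; ring

lemma Qc_pos (c θ : ℝ) : 0 < Qc c θ := add_pos (Phi_pos _) (Phi_pos _)

lemma shifted_sq_integrable (t : ℝ) : Integrable (fun u : ℝ => (u - t) ^ 2 * phi u) := by
  have : (fun u : ℝ => (u - t) ^ 2 * phi u)
      = fun u => u ^ 2 * phi u - (2 * t) * (u * phi u) + t ^ 2 * phi u :=
    funext fun u => by ring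
  rw [this]
  exact (sq_mul_phi_integrable.sub (id_mul_phi_integrable.const_mul (2 * t))).add
    (phi_integrable.const_mul (t ^ 2))

lemma expand_sq (t : ℝ) (S : Set ℝ) (hS : MeasurableSet S) :
    ∫ u in S, (u - t) ^ 2 * phi u
      = (∫ u in S, u ^ 2 * phi u) - 2 * t * (∫ u in S, u * phi u)
        + t ^ 2 * (∫ u in S, phi u) := by
  have h1 : ∫ u in S, (u - t) ^ 2 * phi u
      = ∫ u in S, (u ^ 2 * phi u - (2 * t) * (u * phi u) + t ^ 2 * phi u) :=
    setIntegral_congr_fun hS fun u _ => by ring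
  have i1 : IntegrableOn (fun u : ℝ => u ^ 2 * phi u) S := sq_mul_phi_integrable.integrableOn
  have i2 : IntegrableOn (fun u : ℝ => 2 * t * (u * phi u)) S :=
    (id_mul_phi_integrable.const_mul (2 * t)).integrableOn
  have i3 : IntegrableOn (fun u : ℝ => t ^ 2 * phi u) S :=
    (phi_integrable.const_mul (t ^ 2)).integrableOn
  have i12 : IntegrableOn (fun u : ℝ => u ^ 2 * phi u - 2 * t * (u * phi u)) S := i1.sub i2
  rw [h1, integral_add i12 i3, integral_sub i1 i2, integral_const_mul, integral_const_mul]

lemma key_ineq (c θ : ℝ) (hc : 0 < c) :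
    (phi (c - θ) - phi (c + θ)) ^ 2
      < Qc c θ * (Qc c θ + (c - θ) * phi (c - θ) + (c + θ) * phi (c + θ)) := by
  set a := c - θ with ha
  set b := -c - θ with hbdef
  have hb : phi (c + θ) = phi b := by
    rw [show c + θ = -b by rw [hbdef]; ring, phi_even]
  have hQ : Qc c θ = (∫ u in Iic b, phi u) + (∫ u in Ioi a, phi u) := by
    unfold Qc
    rw [show θ - c = -a by rw [ha]; ring, Phi_neg_eq, show -θ - c = b by rw [hbdef]; ring]
    unfold Phi; ring
  set Q := Qc c θ with hQdef
  set N := phi a - phi b with hNdef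
  set M := Q + a * phi a - b * phi b with hMdef
  have hQpos : 0 < Q := Qc_pos c θ
  have hN : (∫ u in Iic b, u * phi u) + (∫ u in Ioi a, u * phi u) = N := by
    rw [int_id_mul_phi_Iic, int_id_mul_phi_Ioi, hNdef]; ring
  have hsplit1 : ∫ u in Ioi a, (u ^ 2 - 1) * phi u
      = (∫ u in Ioi a, u ^ 2 * phi u) - ∫ u in Ioi a, phi u := by
    rw [← integral_sub sq_mul_phi_integrable.integrableOn phi_integrable.integrableOn]
    exact setIntegral_congr_fun measurableSet_Ioi fun u _ => by ring
  have hsplit2 : ∫ u in Iic b, (u ^ 2 - 1) * phi u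
      = (∫ u in Iic b, u ^ 2 * phi u) - ∫ u in Iic b, phi u := by
    rw [← integral_sub sq_mul_phi_integrable.integrableOn phi_integrable.integrableOn]
    exact setIntegral_congr_fun measurableSet_Iic fun u _ => by ring
  have hM : (∫ u in Iic b, u ^ 2 * phi u) + (∫ u in Ioi a, u ^ 2 * phi u) = M := by
    have h1 := int_sq_sub_one_Ioi a
    have h2 := int_sq_sub_one_Iic b
    rw [hsplit1] at h1
    rw [hsplit2] at h2
    rw [hMdef, hQ]
    linarith
  set t := N / Q with htdef
  have htQ : t * Q = N := div_mul_cancel₀ N hQpos.ne'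
  have hP1 : 0 ≤ ∫ u in Iic b, (u - t) ^ 2 * phi u :=
    setIntegral_nonneg measurableSet_Iic fun u _ =>
      mul_nonneg (sq_nonneg _) (phi_pos u).le
  have hP2 : 0 < ∫ u in Ioi a, (u - t) ^ 2 * phi u := by
    rw [setIntegral_pos_iff_support_of_nonneg_ae
      (Filter.Eventually.of_forall fun u => mul_nonneg (sq_nonneg _) (phi_pos u).le)
      (shifted_sq_integrable t).integrableOn]
    have hsub : Ioi (max a t) ⊆ Function.support (fun u => (u - t) ^ 2 * phi u) ∩ Ioi a := by
      intro u hu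
      have h1 : a < u := lt_of_le_of_lt (le_max_left a t) hu
      have h2 : t < u := lt_of_le_of_lt (le_max_right a t) hu
      constructor
      · simp only [Function.mem_support]
        have : (0:ℝ) < (u - t) ^ 2 := pow_pos (sub_pos.mpr h2) 2
        exact (mul_pos this (phi_pos u)).ne'
      · exact h1
    calc (0 : ENNReal) < volume (Ioi (max a t)) := by simp [Real.volume_Ioi]
      _ ≤ _ := measure_mono hsub
  have hPsum : 0 < M - 2 * t * N + t ^ 2 * Q := by
    have e1 := expand_sq t (Iic b) measurableSet_Iic
    have e2 := expand_sq t (Ioi a) measurableSet_Ioi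
    have : 0 < (∫ u in Iic b, (u - t) ^ 2 * phi u) + ∫ u in Ioi a, (u - t) ^ 2 * phi u :=
      lt_of_lt_of_le hP2 (le_add_of_nonneg_left hP1)
    rw [e1, e2] at this
    have hQ' : (∫ u in Iic b, phi u) + (∫ u in Ioi a, phi u) = Q := hQ.symm
    have h3 : t ^ 2 * (∫ u in Iic b, phi u) + t ^ 2 * (∫ u in Ioi a, phi u) = t ^ 2 * Q := by
      rw [← hQ']; ring
    have h4 : 2 * t * (∫ u in Iic b, u * phi u) + 2 * t * (∫ u in Ioi a, u * phi u)
        = 2 * t * N := by rw [← hN]; ring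
    linarith [this, hM, h3, h4]
  have hgoal : N ^ 2 < Q * M := by
    have expand : Q * (M - 2 * t * N + t ^ 2 * Q) = Q * M - N ^ 2 := by
      rw [← htQ]; ring
    have := mul_pos hQpos hPsum
    rw [expand] at this
    linarith
  calc (phi (c - θ) - phi (c + θ)) ^ 2 = N ^ 2 := by rw [hb]
    _ < Q * M := hgoal
    _ = Q * (Q + (c - θ) * phi (c - θ) + (c + θ) * phi (c + θ)) := by
        rw [hb, hMdef]; rw [show c + θ = -b by rw [hbdef]; ring]; ring

lemma hasDerivAt_Qc_theta (c θ : ℝ) :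
    HasDerivAt (fun θ => Qc c θ) (phi (c - θ) - phi (c + θ)) θ := by
  have h1 : HasDerivAt (fun θ : ℝ => Phi (θ - c)) (phi (θ - c)) θ := by
    have := (hasDerivAt_Phi (θ - c)).comp θ ((hasDerivAt_id θ).sub_const c)
    exact this.congr_deriv (by ring)
  have h2 : HasDerivAt (fun θ : ℝ => Phi (-θ - c)) (-phi (-θ - c)) θ := by
    have hinner : HasDerivAt (fun θ : ℝ => -θ - c) (-1) θ := ((hasDerivAt_id θ).neg).sub_const c
    have := (hasDerivAt_Phi (-θ - c)).comp θ hinner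
    exact this.congr_deriv (by ring)
  have hsum := h1.add h2
  unfold Qc
  exact hsum.congr_deriv (by
    rw [show c - θ = -(θ - c) by ring, phi_even, show c + θ = -(-θ - c) by ring, phi_even]
    ring)

lemma hasDerivAt_N (c θ : ℝ) :
    HasDerivAt (fun θ => phi (c - θ) - phi (c + θ))
      ((c - θ) * phi (c - θ) + (c + θ) * phi (c + θ)) θ := by
  have h1 : HasDerivAt (fun θ : ℝ => phi (c - θ)) ((c - θ) * phi (c - θ)) θ := by
    have hi : HasDerivAt (fun θ : ℝ => c - θ) (-1) θ := (hasDerivAt_id θ).const_sub c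
    have := (hasDerivAt_phi (c - θ)).comp θ hi
    exact this.congr_deriv (by ring)
  have h2 : HasDerivAt (fun θ : ℝ => phi (c + θ)) (-(c + θ) * phi (c + θ)) θ := by
    have hi : HasDerivAt (fun θ : ℝ => c + θ) 1 θ := (hasDerivAt_id θ).const_add c
    have := (hasDerivAt_phi (c + θ)).comp θ hi
    exact this.congr_deriv (by ring)
  have := h1.sub h2
  exact this.congr_deriv (by ring)

lemma hasDerivAt_loglik (c x θ : ℝ) :
    HasDerivAt (fun θ => Real.log (phi (x - θ)) - Real.log (Qc c θ))
      ((x - θ) - (phi (c - θ) - phi (c + θ)) / Qc c θ) θ := by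
  have hlogphi : ∀ θ : ℝ, Real.log (phi (x - θ))
      = -Real.log (Real.sqrt (2 * Real.pi)) - (x - θ) ^ 2 / 2 := by
    intro θ
    unfold phi
    rw [Real.log_mul (by positivity) (Real.exp_pos _).ne', Real.log_inv, Real.log_exp]
    ring
  have h1 : HasDerivAt (fun θ : ℝ => Real.log (phi (x - θ))) (x - θ) θ := by
    have hi : HasDerivAt (fun θ : ℝ => x - θ) (-1) θ := (hasDerivAt_id θ).const_sub x
    have hd := ((hi.pow 2).div_const 2).const_sub (-Real.log (Real.sqrt (2 * Real.pi)))
    have hd' : HasDerivAt (fun θ : ℝ => -Real.log (Real.sqrt (2 * Real.pi)) - (x - θ) ^ 2 / 2)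
        (x - θ) θ := by
      exact hd.congr_deriv (by
        push_cast
        ring)
    exact hd'.congr_of_eventuallyEq (Filter.Eventually.of_forall fun θ => hlogphi θ)
  have h2 : HasDerivAt (fun θ : ℝ => Real.log (Qc c θ))
      ((phi (c - θ) - phi (c + θ)) / Qc c θ) θ :=
    (hasDerivAt_Qc_theta c θ).log (Qc_pos c θ).ne'
  exact h1.sub h2

lemma score_strictAnti (c x : ℝ) (hc : 0 < c) :
    StrictAnti (fun θ : ℝ => (x - θ) - (phi (c - θ) - phi (c + θ)) / Qc c θ) := by
  apply strictAnti_of_hasDerivAt_neg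
    (f' := fun θ => -1 - (((c - θ) * phi (c - θ) + (c + θ) * phi (c + θ)) * Qc c θ
      - (phi (c - θ) - phi (c + θ)) * (phi (c - θ) - phi (c + θ))) / (Qc c θ) ^ 2)
  · intro θ
    have hdiv := (hasDerivAt_N c θ).div (hasDerivAt_Qc_theta c θ) (Qc_pos c θ).ne'
    have hlin : HasDerivAt (fun θ : ℝ => x - θ) (-1) θ := (hasDerivAt_id θ).const_sub x
    exact hlin.sub hdiv
  · intro θ
    have hQ : 0 < Qc c θ := Qc_pos c θ
    have key := key_ineq c θ hc
    have hQ2 : 0 < (Qc c θ) ^ 2 := pow_pos hQ 2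
    have hgt : -1 < (((c - θ) * phi (c - θ) + (c + θ) * phi (c + θ)) * Qc c θ
        - (phi (c - θ) - phi (c + θ)) * (phi (c - θ) - phi (c + θ))) / (Qc c θ) ^ 2 := by
      rw [lt_div_iff₀ hQ2]
      nlinarith [key]
    linarith

/-- For a fixed observation `x` with `|x| ≥ c`, the conditional
log-likelihood `θ ↦ log φ(x-θ) - log Q_c(θ)` is unimodal: its derivative is
`θ ↦ (x - θ) - (φ(c-θ) - φ(c+θ))/Q_c(θ)`, this derivative is strictly
decreasing in `θ`, and the likelihood equation
`x = θ + (φ(c-θ) - φ(-c-θ))/Q_c(θ)` has at most one solution. -/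
theorem truncated_normal_loglik_unimodal (c x : ℝ) (hc : 0 < c) (hx : c ≤ |x|) :
    (∀ θ : ℝ, HasDerivAt (fun θ => Real.log (phi (x - θ)) - Real.log (Qc c θ))
        ((x - θ) - (phi (c - θ) - phi (c + θ)) / Qc c θ) θ) ∧
    StrictAnti (fun θ : ℝ => (x - θ) - (phi (c - θ) - phi (c + θ)) / Qc c θ) ∧
    (∀ θ₁ θ₂ : ℝ,
        x = θ₁ + (phi (c - θ₁) - phi (-c - θ₁)) / Qc c θ₁ →
        x = θ₂ + (phi (c - θ₂) - phi (-c - θ₂)) / Qc c θ₂ → θ₁ = θ₂) := by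
  refine ⟨fun θ => hasDerivAt_loglik c x θ, score_strictAnti c x hc, ?_⟩
  intro θ₁ θ₂ h1 h2
  have he : ∀ θ : ℝ, phi (-c - θ) = phi (c + θ) := fun θ => by
    rw [show -c - θ = -(c + θ) by ring, phi_even]
  rw [he θ₁] at h1
  rw [he θ₂] at h2
  apply (score_strictAnti c x hc).injective
  show (x - θ₁) - (phi (c - θ₁) - phi (c + θ₁)) / Qc c θ₁
      = (x - θ₂) - (phi (c - θ₂) - phi (c + θ₂)) / Qc c θ₂
  have e1 : (x - θ₁) - (phi (c - θ₁) - phi (c + θ₁)) / Qc c θ₁ = 0 := by rw [h1]; ring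
  have e2 : (x - θ₂) - (phi (c - θ₂) - phi (c + θ₂)) / Qc c θ₂ = 0 := by rw [h2]; ring
  rw [e1, e2]
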